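/- Let u ∈ L^∞(L^{p,λ}_τ)(X×ℝ₊, dω dt), i.e., sup_{t>0} sup_B (ω(B)^{-λ} ∫_B |u(·,t)|^p dω)^{1/p} (1+r_B/ρ(x_B))^τ < ∞, and suppose u satisfies the mean value inequality |u(x,t)| ≤ C_N ⨍_{t/2}^{3t/2} ⨍_{B(x,t)} |u(y,s)| dμ(y) ds · (1+t/ρ(x))^{-N} for all N > 0. Then |u(x,t)| ≤ C ω(B(x,t))^{(λ-1)/p} ‖u‖_{L^∞(L^{p,λ}_τ)} for all x ∈ X and t > 0. -/

import Mathlib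

open MeasureTheory Metric Real

/-- pointwise bound for a function in the weighted harmonic Morrey
space `L^∞(L^{p,λ}_τ)(X×ℝ₊, dω dt)` satisfying the interior mean value inequality
with arbitrary decay. -/
theorem morrey_solution_pointwise_bound
    {X : Type*} [MetricSpace X] [MeasurableSpace X]
    (μ : Measure X) (u : X → ℝ → ℝ) (ρ : X → ℝ) (ω : X → ℝ)
    (p lam τ θ A M : ℝ)
    (hp : 1 < p) (hlam0 : 0 < lam) (hlam1 : lam < 1) (hθ : 0 < θ)
    (hA : 0 < A) (hM : 0 ≤ M)
    (hρ : ∀ x, 0 < ρ x) (hω : ∀ x, 0 < ω x)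
    (hfin : ∀ (x : X) (r : ℝ), 0 < r → 0 < (μ (ball x r)).toReal)
    -- the `A_p^{ρ,θ}` average inequality (consequence of `ω ∈ A_p^{ρ,θ}`)
    (hAp : ∀ (x : X) (r : ℝ), 0 < r → ∀ f : X → ℝ,
      ((1 + r / ρ x) ^ θ * (μ (ball x r)).toReal)⁻¹ * ∫ y in ball x r, |f y| ∂μ
        ≤ A ^ (1 / p) *
          ((∫ y in ball x r, ω y ∂μ)⁻¹ *
            ∫ y in ball x r, |f y| ^ p * ω y ∂μ) ^ (1 / p))
    -- the weighted Morrey norm of `u(·,t)` is uniformly bounded by `M`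
    (hnorm : ∀ t : ℝ, 0 < t → ∀ (x : X) (r : ℝ), 0 < r →
      (((∫ y in ball x r, ω y ∂μ) ^ lam)⁻¹ *
          ∫ y in ball x r, |u y t| ^ p * ω y ∂μ) ^ (1 / p) *
        (1 + r / ρ x) ^ τ ≤ M)
    -- mean value inequality with arbitrary polynomial decay in `t/ρ(x)`
    (hmean : ∀ N : ℝ, 0 < N → ∃ C_N : ℝ, 0 < C_N ∧
      ∀ (x : X) (t : ℝ), 0 < t →
        |u x t| ≤ C_N *
          (t⁻¹ * ∫ s in Set.Ioo (t / 2) (3 * t / 2),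
            ((μ (ball x t)).toReal⁻¹ * ∫ y in ball x t, |u y s| ∂μ)) *
          (1 + t / ρ x) ^ (-N)) :
    ∃ C : ℝ, 0 < C ∧ ∀ (x : X) (t : ℝ), 0 < t →
      |u x t| ≤ C * (∫ y in ball x t, ω y ∂μ) ^ ((lam - 1) / p) * M := by
  -- positivity of the weighted measure of balls
  have hWpos : ∀ (x : X) (r : ℝ), 0 < r → 0 < ∫ y in ball x r, ω y ∂μ := by
    intro x r hr
    rcases lt_or_ge 0 (∫ y in ball x r, ω y ∂μ) with h | h
    · exact h
    exfalso
    have hW0 : (∫ y in ball x r, ω y ∂μ) = 0 :=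
      le_antisymm h (integral_nonneg fun y => (hω y).le)
    have h1 := hAp x r hr (fun _ => 1)
    have hPpos : (0:ℝ) < (1 + r / ρ x) ^ θ := by
      apply Real.rpow_pos_of_pos
      have := div_nonneg hr.le (hρ x).le
      linarith
    have hμpos := hfin x r hr
    have hint : (∫ y in ball x r, |(1:ℝ)| ∂μ) = (μ (ball x r)).toReal := by
      simp [MeasureTheory.setIntegral_const, Measure.real]
    rw [hint, hW0] at h1
    have hps : (1:ℝ)/p ≠ 0 := by positivity
    rw [inv_zero, zero_mul, Real.zero_rpow hps, mul_zero] at h1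
    have : (0:ℝ) < ((1 + r / ρ x) ^ θ * (μ (ball x r)).toReal)⁻¹ * (μ (ball x r)).toReal := by
      positivity
    linarith
  set N := θ + |τ| + 1 with hNdef
  have hNpos : 0 < N := by positivity
  obtain ⟨C_N, hC_Npos, hC_N⟩ := hmean N hNpos
  refine ⟨C_N * A ^ (1/p), by positivity, ?_⟩
  intro x t ht
  set B := ball x t with hBdef
  set W := ∫ y in B, ω y ∂μ with hWdef
  have hWp : 0 < W := hWpos x t ht
  set P := 1 + t / ρ x with hPdef
  have hP1 : (1:ℝ) ≤ P := by
    have := div_nonneg ht.le (hρ x).le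
    simp only [hPdef]; linarith
  have hPpos : (0:ℝ) < P := lt_of_lt_of_le one_pos hP1
  set K := P ^ θ * (A ^ (1/p) * (W ^ ((lam-1)/p) * (M * P ^ (-τ)))) with hKdef
  have hKnonneg : 0 ≤ K := by
    have h1 : (0:ℝ) ≤ P ^ θ := (Real.rpow_pos_of_pos hPpos θ).le
    have h2 : (0:ℝ) ≤ A ^ (1/p) := (Real.rpow_pos_of_pos hA _).le
    have h3 : (0:ℝ) ≤ W ^ ((lam-1)/p) := (Real.rpow_pos_of_pos hWp _).le
    have h4 : (0:ℝ) ≤ P ^ (-τ) := (Real.rpow_pos_of_pos hPpos _).le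
    positivity
  -- key bound for each time slice
  have key : ∀ s : ℝ, 0 < s →
      (μ B).toReal⁻¹ * ∫ y in B, |u y s| ∂μ ≤ K := by
    intro s hs
    have h1 := hAp x t ht (fun y => u y s)
    have h2 := hnorm s hs x t ht
    simp only [← hBdef, ← hWdef, ← hPdef] at h1 h2
    set I := ∫ y in B, |u y s| ^ p * ω y ∂μ with hIdef
    have hInn : 0 ≤ I := by
      apply integral_nonneg
      intro y
      have : (0:ℝ) ≤ |u y s| ^ p := Real.rpow_nonneg (abs_nonneg _) p
      have := (hω y).le
      positivity
    have hPτ : (0:ℝ) < P ^ τ := Real.rpow_pos_of_pos hPpos τ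
    -- rearrange h2
    have h2' : ((W ^ lam)⁻¹ * I) ^ (1/p) ≤ M * P ^ (-τ) := by
      rw [Real.rpow_neg hPpos.le, ← div_eq_mul_inv]
      exact (le_div_iff₀ hPτ).mpr h2
    -- rewrite (W⁻¹ * I)^(1/p)
    have hsplit : (W⁻¹ * I) ^ (1/p) = W ^ ((lam-1)/p) * ((W ^ lam)⁻¹ * I) ^ (1/p) := by
      have e1 : W⁻¹ = W ^ (lam - 1) * (W ^ lam)⁻¹ := by
        rw [← Real.rpow_neg hWp.le lam, ← Real.rpow_add hWp,
          show lam - 1 + -lam = -1 by ring, Real.rpow_neg_one]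
      rw [e1, mul_assoc, Real.mul_rpow (Real.rpow_nonneg hWp.le _)
        (by positivity), ← Real.rpow_mul hWp.le,
        show (lam - 1) * (1/p) = (lam-1)/p by ring]
    have h3 : (W⁻¹ * I) ^ (1/p) ≤ W ^ ((lam-1)/p) * (M * P ^ (-τ)) := by
      rw [hsplit]
      exact mul_le_mul_of_nonneg_left h2' (Real.rpow_pos_of_pos hWp _).le
    have h4 : ((P ^ θ * (μ B).toReal)⁻¹ * ∫ y in B, |u y s| ∂μ)
        ≤ A ^ (1/p) * (W ^ ((lam-1)/p) * (M * P ^ (-τ))) :=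
      le_trans h1 (mul_le_mul_of_nonneg_left h3 (Real.rpow_pos_of_pos hA _).le)
    have hPθ : (0:ℝ) < P ^ θ := Real.rpow_pos_of_pos hPpos θ
    have hμB := hfin x t ht
    calc (μ B).toReal⁻¹ * ∫ y in B, |u y s| ∂μ
        = P ^ θ * ((P ^ θ * (μ B).toReal)⁻¹ * ∫ y in B, |u y s| ∂μ) := by
          rw [mul_inv]
          field_simp
      _ ≤ P ^ θ * (A ^ (1/p) * (W ^ ((lam-1)/p) * (M * P ^ (-τ)))) :=
          mul_le_mul_of_nonneg_left h4 hPθ.le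
  -- bound the time average
  have hS : (∫ s in Set.Ioo (t/2) (3*t/2),
      ((μ B).toReal⁻¹ * ∫ y in B, |u y s| ∂μ)) ≤ K * t := by
    have hvol : (volume (Set.Ioo (t/2) (3*t/2))).toReal = t := by
      rw [Real.volume_Ioo]
      rw [ENNReal.toReal_ofReal (by linarith)]
      ring
    have hfin' : volume (Set.Ioo (t/2) (3*t/2)) < ⊤ := measure_Ioo_lt_top
    have hbd := norm_setIntegral_le_of_norm_le_const_ae' (f := fun s =>
        (μ B).toReal⁻¹ * ∫ y in B, |u y s| ∂μ) (C := K) hfin' ?_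
    · calc (∫ s in Set.Ioo (t/2) (3*t/2), ((μ B).toReal⁻¹ * ∫ y in B, |u y s| ∂μ))
          ≤ ‖∫ s in Set.Ioo (t/2) (3*t/2), ((μ B).toReal⁻¹ * ∫ y in B, |u y s| ∂μ)‖ :=
            le_abs_self _
        _ ≤ K * (volume (Set.Ioo (t/2) (3*t/2))).toReal := hbd
        _ = K * t := by rw [hvol]
    · filter_upwards with s hs
      have hspos : 0 < s := lt_trans (by linarith : (0:ℝ) < t/2) hs.1
      have hnn : 0 ≤ (μ B).toReal⁻¹ * ∫ y in B, |u y s| ∂μ := by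
        have : 0 ≤ ∫ y in B, |u y s| ∂μ := integral_nonneg fun y => abs_nonneg _
        positivity
      rw [Real.norm_eq_abs, abs_of_nonneg hnn]
      exact key s hspos
  -- assemble
  have hmain := hC_N x t ht
  simp only [← hBdef, ← hPdef] at hmain
  have hPN : (0:ℝ) < P ^ (-N) := Real.rpow_pos_of_pos hPpos _
  have havg : t⁻¹ * (∫ s in Set.Ioo (t/2) (3*t/2),
      ((μ B).toReal⁻¹ * ∫ y in B, |u y s| ∂μ)) ≤ K := by
    have := mul_le_mul_of_nonneg_left hS (inv_nonneg.mpr ht.le)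
    calc t⁻¹ * (∫ s in Set.Ioo (t/2) (3*t/2),
          ((μ B).toReal⁻¹ * ∫ y in B, |u y s| ∂μ)) ≤ t⁻¹ * (K * t) := this
      _ = K := by field_simp
  have step1 : |u x t| ≤ C_N * K * P ^ (-N) := by
    refine le_trans hmain ?_
    apply mul_le_mul_of_nonneg_right _ hPN.le
    exact mul_le_mul_of_nonneg_left havg hC_Npos.le
  have hexp : P ^ θ * P ^ (-τ) * P ^ (-N) = P ^ (θ - τ - N) := by
    rw [← Real.rpow_add hPpos, ← Real.rpow_add hPpos]
    ring_nf
  have hexple : P ^ (θ - τ - N) ≤ 1 := by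
    apply Real.rpow_le_one_of_one_le_of_nonpos hP1
    have := neg_abs_le τ
    simp only [hNdef]
    linarith
  have hWe : (0:ℝ) ≤ W ^ ((lam-1)/p) := (Real.rpow_pos_of_pos hWp _).le
  calc |u x t| ≤ C_N * K * P ^ (-N) := step1
    _ = (C_N * A ^ (1/p)) * W ^ ((lam-1)/p) * M * (P ^ θ * P ^ (-τ) * P ^ (-N)) := by
        simp only [hKdef]; ring
    _ = (C_N * A ^ (1/p)) * W ^ ((lam-1)/p) * M * P ^ (θ - τ - N) := by rw [hexp]
    _ ≤ (C_N * A ^ (1/p)) * W ^ ((lam-1)/p) * M * 1 := by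
        apply mul_le_mul_of_nonneg_left hexple
        have : (0:ℝ) ≤ A ^ (1/p) := (Real.rpow_pos_of_pos hA _).le
        positivity
    _ = (C_N * A ^ (1/p)) * W ^ ((lam-1)/p) * M := by ring
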